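/- arXiv:0707.3764 — 2 statements merged into one kernel-verified Lean document; each statement's English description precedes it below -/
import Mathlib

section
/- For the general slip function F(v) = A₁(1 + A₂/(1 + A₃v²))v with A₁, A₃ > 0, F is non-monotonic on (0,∞) (i.e., F' vanishes somewhere) if and only if A₂ > 8. -/
/-!
With `x = A₃ v²`, the derivative is `F'(v) = A₁ ((1 + x)² + A₂ (1 - x)) / (1 + x)²`, and completing
the square gives `(1 + x)² + A₂ (1 - x) = (x - (A₂ - 2) / 2)² + A₂ (8 - A₂) / 4`. For `0 < A₂ ≤ 8`
the numerator is therefore nonnegative and `F` is monotone; for `A₂ > 8` it is negative at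
`x = (A₂ - 2) / 2 > 0`, which is attained by some `v > 0`, and `F` decreases there.
-/

noncomputable section

def slip (A₁ A₂ A₃ v : ℝ) : ℝ := A₁ * (1 + A₂ / (1 + A₃ * v ^ 2)) * v

def slipDeriv (A₁ A₂ A₃ v : ℝ) : ℝ :=
  A₁ * ((1 + A₃ * v ^ 2) ^ 2 + A₂ * (1 - A₃ * v ^ 2)) / (1 + A₃ * v ^ 2) ^ 2

end

section

variable {A₁ A₂ A₃ : ℝ}

theorem hasDerivAt_slip (v : ℝ) (hv : 1 + A₃ * v ^ 2 ≠ 0) :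
    HasDerivAt (slip A₁ A₂ A₃) (slipDeriv A₁ A₂ A₃ v) v := by
  have hden : HasDerivAt (fun v : ℝ => 1 + A₃ * v ^ 2) (A₃ * (2 * v)) v := by
    simpa using ((hasDerivAt_pow 2 v).const_mul A₃).const_add 1
  have h := (((hasDerivAt_const v A₂).div hden hv).const_add 1 |>.const_mul A₁).mul (hasDerivAt_id v)
  refine h.congr_deriv ?_
  simp only [slipDeriv, Pi.div_apply, id]
  field_simp
  ring

theorem slip_numerator_eq (x : ℝ) :
    (1 + x) ^ 2 + A₂ * (1 - x) = (x - (A₂ - 2) / 2) ^ 2 + A₂ * (8 - A₂) / 4 := by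
  ring

theorem slipDeriv_nonneg (hA₁ : 0 ≤ A₁) (hA₂ : 0 ≤ A₂) (h8 : A₂ ≤ 8) (v : ℝ) :
    0 ≤ slipDeriv A₁ A₂ A₃ v := by
  have hnum : 0 ≤ (1 + A₃ * v ^ 2) ^ 2 + A₂ * (1 - A₃ * v ^ 2) := by
    rw [slip_numerator_eq]
    have : 0 ≤ A₂ * (8 - A₂) := mul_nonneg hA₂ (by linarith)
    positivity
  unfold slipDeriv
  positivity

theorem exists_slipDeriv_neg (hA₁ : 0 < A₁) (hA₃ : 0 < A₃) (h8 : 8 < A₂) :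
    ∃ v, 0 < v ∧ slipDeriv A₁ A₂ A₃ v < 0 := by
  have hx₀ : 0 < (A₂ - 2) / 2 / A₃ := div_pos (by linarith) hA₃
  set v := √((A₂ - 2) / 2 / A₃)
  have hx : A₃ * v ^ 2 = (A₂ - 2) / 2 := by
    rw [Real.sq_sqrt hx₀.le]
    field_simp
  refine ⟨v, Real.sqrt_pos.2 hx₀, ?_⟩
  have hnum : (1 + A₃ * v ^ 2) ^ 2 + A₂ * (1 - A₃ * v ^ 2) < 0 := by
    rw [slip_numerator_eq, hx, sub_self]
    nlinarith
  unfold slipDeriv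
  exact div_neg_of_neg_of_pos (mul_neg_of_pos_of_neg hA₁ hnum) (by positivity)

end

/-- For the slip function `F(v) = A₁(1 + A₂/(1 + A₃ v²)) v` with `A₁, A₂, A₃ > 0`,
`F` is non-monotonic on `(0, ∞)` if and only if `A₂ > 8`. -/
theorem stmt_1 (A₁ A₂ A₃ : ℝ) (hA₁ : 0 < A₁) (hA₂ : 0 < A₂) (hA₃ : 0 < A₃)
    (F : ℝ → ℝ) (hF : ∀ v, F v = A₁ * (1 + A₂ / (1 + A₃ * v ^ 2)) * v) :
    ¬ MonotoneOn F (Set.Ioi (0 : ℝ)) ↔ 8 < A₂ := by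
  obtain rfl : F = slip A₁ A₂ A₃ := funext hF
  have hderiv (v : ℝ) : HasDerivAt (slip A₁ A₂ A₃) (slipDeriv A₁ A₂ A₃ v) v :=
    hasDerivAt_slip v (by positivity)
  constructor
  · intro hnot
    by_contra! h8
    exact hnot ((monotone_of_hasDerivAt_nonneg hderiv
      (slipDeriv_nonneg hA₁.le hA₂.le h8)).monotoneOn _)
  · rintro h8 hmono
    obtain ⟨v, hv, hneg⟩ := exists_slipDeriv_neg hA₁ hA₃ h8
    have hnonneg := hmono.derivWithin_nonneg (x := v)
    rw [derivWithin_of_isOpen isOpen_Ioi hv, (hderiv v).deriv] at hnonneg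
    exact hneg.not_ge hnonneg
end

section
/- For the slip law F(v) = A₁(1 + A₂/(1+A₃v²))v with A₁, A₃ > 0, the flow curve Q(v) = v + F(v)/3 is non-monotonic on (0,∞) if and only if A₂ > 8(1 + 3/A₁). -/
/-!
With `u = A₃ v²`, the derivative is `Q' = 1 + A₁ (1 + A₂ (1 - u) / (1 + u)²) / 3`. Since
`(1 + u)² + 8 (1 - u) = (u - 3)²`, the factor `(1 - u) / (1 + u)²` has minimum `-1/8`, attained at
`u = 3`, so `Q'` takes a negative value exactly when `1 - A₂ / 8 < -3 / A₁`.
-/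

open Real

lemma neg_one_div_eight_le_one_sub_div_one_add_sq (u : ℝ) :
    -(1 / 8) ≤ (1 - u) / (1 + u) ^ 2 := by
  rcases eq_or_ne (1 + u) 0 with hu | hu
  · simp [hu]
  · rw [le_div_iff₀ (by positivity)]
    nlinarith [sq_nonneg (u - 3)]

noncomputable def slipLaw (A₁ A₂ A₃ v : ℝ) : ℝ := A₁ * (1 + A₂ / (1 + A₃ * v ^ 2)) * v

lemma hasDerivAt_slipLaw (A₁ A₂ : ℝ) {A₃ : ℝ} (hA₃ : 0 ≤ A₃) (v : ℝ) :
    HasDerivAt (slipLaw A₁ A₂ A₃)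
      (A₁ * (1 + A₂ * ((1 - A₃ * v ^ 2) / (1 + A₃ * v ^ 2) ^ 2))) v := by
  have hden : 1 + A₃ * v ^ 2 ≠ 0 := by positivity
  have hinner : HasDerivAt (fun w => 1 + A₃ * w ^ 2) (A₃ * (2 * v)) v := by
    simpa using ((hasDerivAt_pow 2 v).const_mul A₃).const_add 1
  have hF : HasDerivAt (slipLaw A₁ A₂ A₃)
      (A₁ * ((0 * (1 + A₃ * v ^ 2) - A₂ * (A₃ * (2 * v))) / (1 + A₃ * v ^ 2) ^ 2) * v
        + A₁ * (1 + A₂ / (1 + A₃ * v ^ 2)) * 1) v :=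
    (((hasDerivAt_const v A₂).div hinner hden).const_add 1 |>.const_mul A₁).mul
      (hasDerivAt_id' v)
  convert hF using 1
  field_simp
  ring

lemma one_add_mul_div_three_neg_iff {A₁ : ℝ} (hA₁ : 0 < A₁) (x : ℝ) :
    1 + A₁ * x / 3 < 0 ↔ x < -(3 / A₁) := by
  rw [← neg_div, lt_div_iff₀ hA₁]
  constructor <;> intro h <;> linarith

/-- For the slip law `F(v) = A₁(1 + A₂/(1 + A₃ v²)) v` with `A₁, A₂, A₃ > 0`, the flow curve
`Q(v) = v + F(v)/3` is non-monotonic on `(0, ∞)` (i.e. `Q' < 0` somewhere on `(0,∞)`)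
if and only if `A₂ > 8(1 + 3/A₁)`. -/
theorem stmt_7 (A₁ A₂ A₃ : ℝ) (hA₁ : 0 < A₁) (hA₂ : 0 < A₂) (hA₃ : 0 < A₃)
    (F Q : ℝ → ℝ)
    (hF : ∀ v, F v = A₁ * (1 + A₂ / (1 + A₃ * v ^ 2)) * v)
    (hQ : ∀ v, Q v = v + F v / 3) :
    (∃ v : ℝ, 0 < v ∧ deriv Q v < 0) ↔ 8 * (1 + 3 / A₁) < A₂ := by
  have hQ' (v : ℝ) :
      deriv Q v = 1 + A₁ * (1 + A₂ * ((1 - A₃ * v ^ 2) / (1 + A₃ * v ^ 2) ^ 2)) / 3 := by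
    have hQ_eq : Q = fun v => v + slipLaw A₁ A₂ A₃ v / 3 := funext fun v => by
      rw [hQ, hF, slipLaw]
    rw [hQ_eq]
    exact ((hasDerivAt_id' v).add ((hasDerivAt_slipLaw A₁ A₂ hA₃.le v).div_const 3)).deriv
  simp_rw [hQ', one_add_mul_div_three_neg_iff hA₁]
  constructor
  · rintro ⟨v, -, hv⟩
    have hmin := neg_one_div_eight_le_one_sub_div_one_add_sq (A₃ * v ^ 2)
    linarith [mul_le_mul_of_nonneg_left hmin hA₂.le]
  · intro h
    refine ⟨√(3 / A₃), by positivity, ?_⟩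
    rw [sq_sqrt (by positivity), mul_div_cancel₀ _ hA₃.ne']
    linarith
end
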